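/- The sharp-interface liquid-gas surface tension of a planar interface, γ^{SIA}_{lg,∞} := −((n_l − n_g)²/2) ∫_{−∞}^0 ∫_0^∞ φ_attr-planar(|z−z'|) dz' dz with planar kernel Φ_Pla, equals (3/4)π (n_l − n_g)², i.e. −(1/2)∫_{−∞}^0 ∫_0^∞ Φ_Pla(|z−z'|) dz' dz = 3π/4. -/

import Mathlib

/-!
Substituting `a = z' - z` turns the double integral over the two half-lines into
`∫_0^∞ Ψ(a) da` with `Ψ(a) = ∫_a^∞ Φ_Pla(t) dt`. Both `Ψ` and its integral are elementary:
`Φ_Pla` is constant on `[0, 1]` and a combination of `t⁻¹⁰` and `t⁻⁴` beyond, which gives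
`Ψ(a) = 6πa/5 - 16π/9` for `a ≤ 1`, `Ψ(a) = 4π/(45 a⁹) - 2π/(3 a³)` beyond, and
`∫_0^∞ Ψ = (3π/5 - 16π/9) + (π/90 - π/3) = -3π/2`.
-/

open MeasureTheory Set Real

noncomputable section

def planarKernel (t : ℝ) : ℝ :=
  if t ≤ 1 then -(6 * π / 5) else 4 * π * (1 / (5 * t ^ 10) - 1 / (2 * t ^ 4))

def planarKernelTail (a : ℝ) : ℝ :=
  if a ≤ 1 then 6 * π / 5 * a - 16 * π / 9
  else 4 * π / 45 * a ^ (-9 : ℝ) - 2 * π / 3 * a ^ (-3 : ℝ)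

end

section HalfLines

variable {E : Type*} [NormedAddCommGroup E] [NormedSpace ℝ E]

theorem integral_Ioi_comp_add_right (f : ℝ → E) (a c : ℝ) :
    ∫ x in Ioi a, f (x + c) = ∫ x in Ioi (a + c), f x := by
  have := (measurePreserving_add_right volume c).setIntegral_preimage_emb
    (measurableEmbedding_addRight c) f (Ioi (a + c))
  rwa [preimage_add_const_Ioi, add_sub_cancel_right] at this

theorem integral_Ioi_eq_integral_Ioc_add_integral_Ioi {f : ℝ → E} {a b : ℝ} (hab : a ≤ b)
    (hf₁ : IntegrableOn f (Ioc a b)) (hf₂ : IntegrableOn f (Ioi b)) :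
    ∫ x in Ioi a, f x = (∫ x in Ioc a b, f x) + ∫ x in Ioi b, f x := by
  rw [← Ioc_union_Ioi_eq_Ioi hab,
    setIntegral_union Ioc_disjoint_Ioi_same measurableSet_Ioi hf₁ hf₂]

theorem integral_Iio_integral_Ioi_comp_abs_sub (f : ℝ → E) :
    ∫ z in Iio 0, ∫ z' in Ioi 0, f |z - z'| = ∫ a in Ioi 0, ∫ t in Ioi a, f t := by
  have inner : ∀ z < (0 : ℝ), ∫ z' in Ioi 0, f |z - z'| = ∫ t in Ioi (-z), f t := by
    intro z hz
    calc ∫ z' in Ioi 0, f |z - z'| = ∫ z' in Ioi 0, f (z' + -z) := by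
          refine setIntegral_congr_fun measurableSet_Ioi fun z' hz' => ?_
          rw [abs_of_neg (by linarith [mem_Ioi.mp hz']), neg_sub, sub_eq_add_neg]
      _ = ∫ t in Ioi (-z), f t := by rw [integral_Ioi_comp_add_right, zero_add]
  rw [setIntegral_congr_fun measurableSet_Iio inner, ← integral_Iic_eq_integral_Iio,
    integral_comp_neg_Iic 0 (fun a => ∫ t in Ioi a, f t), neg_zero]

end HalfLines

theorem integrableOn_Ioi_mul_rpow_sub_mul_rpow {a r s : ℝ} (ha : 0 < a) (hr : r < -1)
    (hs : s < -1) (p q : ℝ) :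
    IntegrableOn (fun t => p * t ^ r - q * t ^ s) (Ioi a) :=
  ((integrableOn_Ioi_rpow_of_lt hr ha).const_mul p).sub
    ((integrableOn_Ioi_rpow_of_lt hs ha).const_mul q)

theorem integral_Ioi_mul_rpow_sub_mul_rpow {a r s : ℝ} (ha : 0 < a) (hr : r < -1)
    (hs : s < -1) (p q : ℝ) :
    ∫ t in Ioi a, (p * t ^ r - q * t ^ s) =
      q * a ^ (s + 1) / (s + 1) - p * a ^ (r + 1) / (r + 1) := by
  rw [integral_sub ((integrableOn_Ioi_rpow_of_lt hr ha).const_mul p)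
      ((integrableOn_Ioi_rpow_of_lt hs ha).const_mul q), integral_const_mul, integral_const_mul,
    integral_Ioi_rpow_of_lt hr ha, integral_Ioi_rpow_of_lt hs ha]
  ring

theorem planarKernel_eqOn_Ioi_one :
    EqOn planarKernel (fun t => 4 * π / 5 * t ^ (-10 : ℝ) - 2 * π * t ^ (-4 : ℝ)) (Ioi 1) := by
  intro t ht
  have ht₀ : 0 < t := one_pos.trans ht
  dsimp only
  rw [planarKernel, if_neg (not_le.mpr ht), rpow_neg ht₀.le, rpow_neg ht₀.le]
  norm_cast
  field_simp
  ring

theorem integrableOn_Ioi_one_planarKernel : IntegrableOn planarKernel (Ioi 1) :=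
  (integrableOn_Ioi_mul_rpow_sub_mul_rpow one_pos (by norm_num) (by norm_num) _ _).congr_fun
    planarKernel_eqOn_Ioi_one.symm measurableSet_Ioi

theorem integral_Ioi_planarKernel_of_one_le {a : ℝ} (ha : 1 ≤ a) :
    ∫ t in Ioi a, planarKernel t = 4 * π / 45 * a ^ (-9 : ℝ) - 2 * π / 3 * a ^ (-3 : ℝ) := by
  rw [setIntegral_congr_fun measurableSet_Ioi (planarKernel_eqOn_Ioi_one.mono (Ioi_subset_Ioi ha)),
    integral_Ioi_mul_rpow_sub_mul_rpow (one_pos.trans_le ha) (by norm_num) (by norm_num)]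
  norm_num
  ring

theorem integral_Ioi_planarKernel (a : ℝ) :
    ∫ t in Ioi a, planarKernel t = planarKernelTail a := by
  rcases le_or_gt a 1 with ha₁ | ha₁
  · have hconst : EqOn planarKernel (fun _ => -(6 * π / 5)) (Ioc a 1) := fun t ht =>
      if_pos ht.2
    rw [integral_Ioi_eq_integral_Ioc_add_integral_Ioi ha₁
        ((integrableOn_const measure_Ioc_lt_top.ne).congr_fun hconst.symm measurableSet_Ioc)
        integrableOn_Ioi_one_planarKernel,
      setIntegral_congr_fun measurableSet_Ioc hconst, setIntegral_const,
      integral_Ioi_planarKernel_of_one_le le_rfl, measureReal_def, volume_Ioc,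
      ENNReal.toReal_ofReal (by linarith), planarKernelTail, if_pos ha₁, one_rpow, one_rpow,
      smul_eq_mul]
    ring
  · rw [integral_Ioi_planarKernel_of_one_le ha₁.le, planarKernelTail, if_neg (not_le.mpr ha₁)]

theorem integral_Ioi_planarKernelTail : ∫ a in Ioi 0, planarKernelTail a = -(3 * π / 2) := by
  have hlin : EqOn planarKernelTail (fun a => 6 * π / 5 * a - 16 * π / 9) (Ioc 0 1) :=
    fun a ha => if_pos ha.2
  have hpow : EqOn planarKernelTail
      (fun a => 4 * π / 45 * a ^ (-9 : ℝ) - 2 * π / 3 * a ^ (-3 : ℝ)) (Ioi 1) :=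
    fun a ha => if_neg (not_le.mpr ha)
  have hlin_int : ∫ a in Ioc 0 1, planarKernelTail a = 3 * π / 5 - 16 * π / 9 := by
    rw [setIntegral_congr_fun measurableSet_Ioc hlin, ← intervalIntegral.integral_of_le zero_le_one,
      intervalIntegral.integral_sub ((continuous_const_mul _).intervalIntegrable 0 1)
        intervalIntegrable_const,
      intervalIntegral.integral_const_mul, integral_id, intervalIntegral.integral_const]
    norm_num
    ring
  have hpow_int : ∫ a in Ioi 1, planarKernelTail a = π / 90 - π / 3 := by
    rw [setIntegral_congr_fun measurableSet_Ioi hpow,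
      integral_Ioi_mul_rpow_sub_mul_rpow one_pos (by norm_num) (by norm_num)]
    norm_num
    ring
  rw [integral_Ioi_eq_integral_Ioc_add_integral_Ioi zero_le_one
      (((continuous_const_mul _).sub continuous_const).integrableOn_Ioc.congr_fun
        hlin.symm measurableSet_Ioc)
      ((integrableOn_Ioi_mul_rpow_sub_mul_rpow one_pos (by norm_num) (by norm_num) _ _).congr_fun
        hpow.symm measurableSet_Ioi),
    hlin_int, hpow_int]
  ring

theorem integral_Iio_integral_Ioi_planarKernel :
    ∫ z in Iio 0, ∫ z' in Ioi 0, planarKernel |z - z'| = -(3 * π / 2) := by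
  rw [integral_Iio_integral_Ioi_comp_abs_sub,
    setIntegral_congr_fun measurableSet_Ioi fun a _ => integral_Ioi_planarKernel a,
    integral_Ioi_planarKernelTail]

theorem gamma_lg_SIA (Φ : ℝ → ℝ)
    (hΦ : ∀ t, Φ t = if t ≤ 1 then -(6 * Real.pi / 5)
        else 4 * Real.pi * (1 / (5 * t ^ 10) - 1 / (2 * t ^ 4)))
    (nl ng : ℝ) :
    (-(1 / 2) * ∫ z in Set.Iio (0 : ℝ), ∫ z' in Set.Ioi (0 : ℝ), Φ |z - z'|)
        = 3 * Real.pi / 4 ∧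
    (-((nl - ng) ^ 2 / 2) * ∫ z in Set.Iio (0 : ℝ), ∫ z' in Set.Ioi (0 : ℝ), Φ |z - z'|)
        = (3 / 4) * Real.pi * (nl - ng) ^ 2 := by
  obtain rfl : Φ = planarKernel := funext hΦ
  rw [integral_Iio_integral_Ioi_planarKernel]
  constructor <;> ring
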